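/- Let x_1,...,x_N in H^D with second-moment matrix C_x = (1/N) Σ_n x_n x_n^T being J_D-diagonalizable with J_D-unitary eigenbasis and distinct absolute J_D-eigenvalues. Then the minimum over p in H^D and Lorentz-orthonormal h'_1,...,h'_{K'} in p^⊥ ([h'_i,h'_j]=δ_{ij}) of Σ_k (h'_k)^T J_D C_x J_D h'_k is attained when h'_1,...,h'_{K'} are the positive J_D-eigenvectors corresponding to the K' smallest positive J_D-eigenvalues, and p is the (scaled) negative J_D-eigenvector; the minimum value equals the sum of those K' smallest positive J_D-eigenvalues. -/

import Mathlib

open Matrix BigOperators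

/-- The Lorentz signature matrix J_D = diag(-1, 1, …, 1) over ℝ. -/
noncomputable def JmatR (D : ℕ) : Matrix (Fin (D + 1)) (Fin (D + 1)) ℝ :=
  Matrix.diagonal (fun i => if i = 0 then (-1 : ℝ) else 1)

namespace HypPCAaux

noncomputable def eps (D : ℕ) (i : Fin (D+1)) : ℝ := if i = 0 then -1 else 1

lemma eps_sq {D : ℕ} (i : Fin (D+1)) : eps D i * eps D i = 1 := by
  unfold eps; split <;> norm_num

lemma eps_zero {D : ℕ} : eps D 0 = -1 := by simp [eps]

lemma eps_succ {D : ℕ} (i : Fin D) : eps D i.succ = 1 := by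
  simp [eps, Fin.succ_ne_zero]

noncomputable def innerJ (D : ℕ) (u w : Fin (D+1) → ℝ) : ℝ := ∑ a, eps D a * u a * w a

lemma innerJ_comm {D : ℕ} (u w : Fin (D+1) → ℝ) : innerJ D u w = innerJ D w u := by
  unfold innerJ; apply Finset.sum_congr rfl; intro a _; ring

lemma dotJ {D : ℕ} (u w : Fin (D+1) → ℝ) : u ⬝ᵥ (JmatR D *ᵥ w) = innerJ D u w := by
  unfold innerJ JmatR eps
  simp only [dotProduct, Matrix.mulVec_diagonal]
  apply Finset.sum_congr rfl; intro a _; ring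

end HypPCAaux

namespace HypPCAaux

lemma JJ {D : ℕ} : JmatR D * JmatR D = 1 := by
  unfold JmatR
  rw [Matrix.diagonal_mul_diagonal]
  rw [show (fun i : Fin (D+1) => (if i = 0 then (-1:ℝ) else 1) * (if i = 0 then (-1:ℝ) else 1))
      = fun _ => (1:ℝ) from funext fun i => by split <;> norm_num, Matrix.diagonal_one]

lemma completeness {D : ℕ} (v : Fin (D+1) → Fin (D+1) → ℝ)
    (hvv : ∀ i j, innerJ D (v i) (v j) = if i = j then eps D i else 0) :
    ∀ a b, (∑ i, eps D i * v i a * v i b) = if a = b then eps D a else 0 := by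
  set M : Matrix (Fin (D+1)) (Fin (D+1)) ℝ := Matrix.of (fun i j => v i j) with hM
  have h1 : M * (JmatR D * Mᵀ) = JmatR D := by
    ext i j
    have : (M * (JmatR D * Mᵀ)) i j = innerJ D (v i) (v j) := by
      unfold innerJ
      simp only [Matrix.mul_apply, Matrix.transpose_apply, Matrix.of_apply, JmatR,
        Matrix.diagonal_apply, ite_mul, zero_mul, Finset.sum_ite_eq, Finset.mem_univ, if_true, hM]
      apply Finset.sum_congr rfl; intro a _; unfold eps; split <;> ring
    rw [this, hvv i j]
    simp only [JmatR, Matrix.diagonal_apply, eps]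
  have h2 : M * ((JmatR D * Mᵀ) * JmatR D) = 1 := by
    rw [← Matrix.mul_assoc, h1, JJ]
  have h3 : ((JmatR D * Mᵀ) * JmatR D) * M = 1 := mul_eq_one_comm.mp h2
  have h4 : Mᵀ * JmatR D * M = JmatR D := by
    calc Mᵀ * JmatR D * M = (JmatR D * JmatR D) * (Mᵀ * JmatR D * M) := by
          rw [JJ, Matrix.one_mul]
    _ = JmatR D * ((JmatR D * Mᵀ) * JmatR D * M) := by simp only [Matrix.mul_assoc]
    _ = JmatR D * 1 := by rw [h3]
    _ = JmatR D := Matrix.mul_one _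
  intro a b
  have : (Mᵀ * JmatR D * M) a b = ∑ i, eps D i * v i a * v i b := by
    simp only [Matrix.mul_apply, Matrix.transpose_apply, Matrix.of_apply, JmatR,
      Matrix.diagonal_apply, ite_mul, zero_mul, mul_ite, mul_zero, Finset.sum_ite_eq,
      Finset.sum_ite_eq', Finset.mem_univ, if_true, hM]
    apply Finset.sum_congr rfl; intro i _; unfold eps; split <;> ring
  rw [← this, h4]
  simp only [JmatR, Matrix.diagonal_apply, eps]

end HypPCAaux

namespace HypPCAaux

lemma expansion {D : ℕ} (v : Fin (D+1) → Fin (D+1) → ℝ)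
    (hvv : ∀ i j, innerJ D (v i) (v j) = if i = j then eps D i else 0)
    (w : Fin (D+1) → ℝ) (a : Fin (D+1)) :
    (∑ i, eps D i * innerJ D w (v i) * v i a) = w a := by
  have hc := completeness v hvv
  calc (∑ i, eps D i * innerJ D w (v i) * v i a)
      = ∑ i, ∑ b, (eps D b * w b) * (eps D i * v i a * v i b) := by
        apply Finset.sum_congr rfl; intro i _
        unfold innerJ
        rw [Finset.mul_sum, Finset.sum_mul]
        apply Finset.sum_congr rfl; intro b _; ring
    _ = ∑ b, (eps D b * w b) * (∑ i, eps D i * v i a * v i b) := by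
        rw [Finset.sum_comm]
        apply Finset.sum_congr rfl; intro b _
        rw [Finset.mul_sum]
    _ = ∑ b, (eps D b * w b) * (if a = b then eps D a else 0) := by
        apply Finset.sum_congr rfl; intro b _; rw [hc a b]
    _ = w a := by
        rw [Finset.sum_eq_single a]
        · simp only [eq_self_iff_true, if_true]
          linear_combination (w a) * eps_sq (D := D) a
        · intro b _ hb; rw [if_neg (Ne.symm hb), mul_zero]
        · intro h; exact absurd (Finset.mem_univ a) h

lemma parseval {D : ℕ} (v : Fin (D+1) → Fin (D+1) → ℝ)
    (hvv : ∀ i j, innerJ D (v i) (v j) = if i = j then eps D i else 0)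
    (w u : Fin (D+1) → ℝ) :
    (∑ i, eps D i * innerJ D w (v i) * innerJ D u (v i)) = innerJ D w u := by
  calc (∑ i, eps D i * innerJ D w (v i) * innerJ D u (v i))
      = ∑ i, ∑ a, (eps D a * u a) * (eps D i * innerJ D w (v i) * v i a) := by
        apply Finset.sum_congr rfl; intro i _
        conv_lhs => rw [innerJ_comm u (v i)]
        unfold innerJ
        rw [Finset.mul_sum]
        apply Finset.sum_congr rfl; intro a _; ring
    _ = ∑ a, (eps D a * u a) * (∑ i, eps D i * innerJ D w (v i) * v i a) := by
        rw [Finset.sum_comm]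
        apply Finset.sum_congr rfl; intro a _; rw [Finset.mul_sum]
    _ = ∑ a, (eps D a * u a) * w a := by
        apply Finset.sum_congr rfl; intro a _; rw [expansion v hvv w a]
    _ = innerJ D w u := by
        unfold innerJ; apply Finset.sum_congr rfl; intro a _; ring

end HypPCAaux

namespace HypPCAaux

lemma value_nonneg {D N : ℕ} (x : Fin N → (Fin (D + 1) → ℝ))
    (Cx : Matrix (Fin (D + 1)) (Fin (D + 1)) ℝ)
    (hCx : Cx = (N : ℝ)⁻¹ • ∑ n, Matrix.vecMulVec (x n) (x n))
    (w : Fin (D+1) → ℝ) :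
    0 ≤ w ⬝ᵥ (JmatR D *ᵥ (Cx *ᵥ (JmatR D *ᵥ w))) := by
  set u := JmatR D *ᵥ w with hu
  have h1 : w ⬝ᵥ (JmatR D *ᵥ (Cx *ᵥ u)) = u ⬝ᵥ (Cx *ᵥ u) := by
    rw [hu]
    simp only [dotProduct, JmatR, Matrix.mulVec_diagonal]
    apply Finset.sum_congr rfl; intro i _; ring
  rw [h1, hCx, Matrix.smul_mulVec, dotProduct_smul, smul_eq_mul]
  have h2 : u ⬝ᵥ ((∑ n, Matrix.vecMulVec (x n) (x n)) *ᵥ u)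
      = ∑ n, (∑ j, x n j * u j) * (∑ j, x n j * u j) := by
    simp only [Matrix.mulVec, dotProduct, Matrix.sum_apply, Matrix.vecMulVec_apply]
    calc ∑ i, u i * ∑ j, (∑ n, x n i * x n j) * u j
        = ∑ i, ∑ j, ∑ n, u i * (x n i * x n j * u j) := by
          apply Finset.sum_congr rfl; intro i _
          rw [Finset.mul_sum]
          apply Finset.sum_congr rfl; intro j _
          rw [Finset.sum_mul, Finset.mul_sum]
      _ = ∑ n, ∑ i, ∑ j, u i * (x n i * x n j * u j) := by
          rw [show (∑ i, ∑ j, ∑ n, u i * (x n i * x n j * u j))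
              = ∑ i, ∑ n, ∑ j, u i * (x n i * x n j * u j) from
            Finset.sum_congr rfl fun i _ => Finset.sum_comm, Finset.sum_comm]
      _ = ∑ n, (∑ j, x n j * u j) * (∑ j, x n j * u j) := by
          apply Finset.sum_congr rfl; intro n _
          rw [Finset.sum_mul_sum]
          apply Finset.sum_congr rfl; intro i _
          apply Finset.sum_congr rfl; intro j _
          ring
  rw [h2]
  apply mul_nonneg (by positivity)
  apply Finset.sum_nonneg
  intro n _
  exact mul_self_nonneg _

end HypPCAaux

namespace HypPCAaux

lemma value_eq {D : ℕ} (Cx : Matrix (Fin (D + 1)) (Fin (D + 1)) ℝ)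
    (v : Fin (D + 1) → (Fin (D + 1) → ℝ)) (lam : Fin (D + 1) → ℝ)
    (hvv : ∀ i j, innerJ D (v i) (v j) = if i = j then eps D i else 0)
    (hAv : ∀ i, (Cx * JmatR D) *ᵥ v i = (eps D i * lam i) • v i)
    (w : Fin (D+1) → ℝ) :
    w ⬝ᵥ (JmatR D *ᵥ (Cx *ᵥ (JmatR D *ᵥ w))) = ∑ i, lam i * (innerJ D w (v i))^2 := by
  rw [show Cx *ᵥ (JmatR D *ᵥ w) = (Cx * JmatR D) *ᵥ w from Matrix.mulVec_mulVec .., dotJ]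
  have hAw : ∀ a, ((Cx * JmatR D) *ᵥ w) a = ∑ i, lam i * innerJ D w (v i) * v i a := by
    intro a
    calc ((Cx * JmatR D) *ᵥ w) a = ∑ b, (Cx * JmatR D) a b * w b := rfl
      _ = ∑ b, (Cx * JmatR D) a b * (∑ i, eps D i * innerJ D w (v i) * v i b) := by
          apply Finset.sum_congr rfl; intro b _
          rw [expansion v hvv w b]
      _ = ∑ b, ∑ i, (eps D i * innerJ D w (v i)) * ((Cx * JmatR D) a b * v i b) := by
          apply Finset.sum_congr rfl; intro b _
          rw [Finset.mul_sum]
          apply Finset.sum_congr rfl; intro i _; ring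
      _ = ∑ i, (eps D i * innerJ D w (v i)) * (∑ b, (Cx * JmatR D) a b * v i b) := by
          rw [Finset.sum_comm]
          apply Finset.sum_congr rfl; intro i _
          rw [Finset.mul_sum]
      _ = ∑ i, lam i * innerJ D w (v i) * v i a := by
          apply Finset.sum_congr rfl; intro i _
          have : (∑ b, (Cx * JmatR D) a b * v i b) = ((Cx * JmatR D) *ᵥ v i) a := rfl
          rw [this, hAv i]
          simp only [Pi.smul_apply, smul_eq_mul]
          linear_combination (innerJ D w (v i) * lam i * v i a) * eps_sq (D := D) i
  unfold innerJ
  calc ∑ a, eps D a * w a * ((Cx * JmatR D) *ᵥ w) a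
      = ∑ a, ∑ i, (lam i * innerJ D w (v i)) * (eps D a * w a * v i a) := by
        apply Finset.sum_congr rfl; intro a _
        rw [hAw a, Finset.mul_sum]
        apply Finset.sum_congr rfl; intro i _; ring
    _ = ∑ i, (lam i * innerJ D w (v i)) * (∑ a, eps D a * w a * v i a) := by
        rw [Finset.sum_comm]
        apply Finset.sum_congr rfl; intro i _
        rw [Finset.mul_sum]
    _ = ∑ i, lam i * (innerJ D w (v i))^2 := by
        apply Finset.sum_congr rfl; intro i _
        unfold innerJ; ring

end HypPCAaux

namespace HypPCAaux

lemma count_lt_le (Dn j : ℕ) : (∑ i : Fin Dn, if (i:ℕ) < j then (1:ℝ) else 0) ≤ j := by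
  rw [Fin.sum_univ_eq_sum_range (fun k => if k < j then (1:ℝ) else 0) Dn]
  calc (∑ k ∈ Finset.range Dn, if k < j then (1:ℝ) else 0)
      ≤ ∑ k ∈ Finset.range (j + Dn), if k < j then (1:ℝ) else 0 := by
        apply Finset.sum_le_sum_of_subset_of_nonneg
        · exact Finset.range_subset_range.mpr (by omega)
        · intro i _ _; split <;> norm_num
    _ = ∑ k ∈ Finset.range j, if k < j then (1:ℝ) else 0 := by
        symm
        apply Finset.sum_subset (Finset.range_subset_range.mpr (by omega))
        intro a ha hna
        rw [if_neg (by simp only [Finset.mem_range] at hna; omega)]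
    _ = j := by
        rw [Finset.sum_congr rfl (fun k hk => if_pos (Finset.mem_range.mp hk))]
        simp

lemma count_ge (Kn j : ℕ) (h : j ≤ Kn) :
    (j:ℝ) ≤ ∑ k : Fin Kn, if (k:ℕ) < j then (1:ℝ) else 0 := by
  rw [Fin.sum_univ_eq_sum_range (fun k => if k < j then (1:ℝ) else 0) Kn]
  calc (j:ℝ) = ∑ k ∈ Finset.range j, if k < j then (1:ℝ) else 0 := by
        rw [Finset.sum_congr rfl (fun k hk => if_pos (Finset.mem_range.mp hk))]
        simp
    _ ≤ ∑ k ∈ Finset.range Kn, if k < j then (1:ℝ) else 0 := by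
        apply Finset.sum_le_sum_of_subset_of_nonneg (Finset.range_subset_range.mpr h)
        intro i _ _; split <;> norm_num

lemma lp {Dn Kn : ℕ} (hK : Kn ≤ Dn) (μ τ cap : Fin Dn → ℝ)
    (hμ0 : ∀ i, 0 ≤ μ i) (hmono : ∀ i j : Fin Dn, i ≤ j → μ i ≤ μ j)
    (hτ0 : ∀ i, 0 ≤ τ i) (hcap0 : ∀ i, 0 ≤ cap i)
    (hτcap : ∀ i, τ i ≤ 1 + cap i)
    (htot : (Kn:ℝ) + ∑ i, cap i ≤ ∑ i, τ i) :
    (∑ k : Fin Kn, μ (Fin.castLE hK k)) ≤ ∑ i, μ i * τ i := by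
  classical
  set f : ℕ → ℝ := fun n => if h : n < Dn then μ ⟨n, h⟩ else
    (if hD : 0 < Dn then μ ⟨Dn - 1, by omega⟩ else 0) with hf
  have hfmono : ∀ m n : ℕ, m ≤ n → f m ≤ f n := by
    intro m n hmn
    by_cases hm : m < Dn
    · by_cases hn : n < Dn
      · simp only [hf, dif_pos hm, dif_pos hn]
        exact hmono _ _ hmn
      · have hD : 0 < Dn := by omega
        simp only [hf, dif_pos hm, dif_neg hn, dif_pos hD]
        exact hmono _ _ (Fin.mk_le_mk.mpr (by omega))
    · have hn : ¬ n < Dn := by omega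
      simp only [hf, dif_neg hm, dif_neg hn]
      exact le_rfl
  have hf0 : ∀ n, 0 ≤ f n := by
    intro n
    by_cases hn : n < Dn
    · simp only [hf, dif_pos hn]; exact hμ0 _
    · simp only [hf, dif_neg hn]
      split
      · exact hμ0 _
      · exact le_rfl
  set d : ℕ → ℝ := fun n => if n = 0 then f 0 else f n - f (n-1) with hd
  have hd0 : ∀ n, 0 ≤ d n := by
    intro n
    cases n with
    | zero => simpa [hd] using hf0 0
    | succ m =>
      simp only [hd, Nat.succ_ne_zero, if_false, Nat.add_sub_cancel]
      have := hfmono m (m+1) (by omega)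
      linarith
  have htel : ∀ n, (∑ j ∈ Finset.range (n+1), d j) = f n := by
    intro n
    induction n with
    | zero => simp [hd]
    | succ m ih =>
      rw [Finset.sum_range_succ, ih]
      simp only [hd, Nat.succ_ne_zero, if_false, Nat.add_sub_cancel]
      ring
  set T : ℕ → ℝ := fun j => ∑ i : Fin Dn, if j ≤ (i:ℕ) then τ i else 0 with hT
  have hT0 : ∀ j, 0 ≤ T j := by
    intro j
    apply Finset.sum_nonneg
    intro i _
    split
    · exact hτ0 i
    · exact le_rfl
  have hTlow : ∀ j, j < Kn → (Kn:ℝ) - j ≤ T j := by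
    intro j hj
    have hsplit : (∑ i, τ i) = T j + ∑ i : Fin Dn, (if (i:ℕ) < j then τ i else 0) := by
      rw [hT, ← Finset.sum_add_distrib]
      apply Finset.sum_congr rfl; intro i _
      by_cases h : (i:ℕ) < j
      · rw [if_neg (by omega), if_pos h, zero_add]
      · rw [if_pos (by omega), if_neg h, add_zero]
    have hlow : (∑ i : Fin Dn, if (i:ℕ) < j then τ i else 0) ≤ j + ∑ i, cap i := by
      calc (∑ i : Fin Dn, if (i:ℕ) < j then τ i else 0)
          ≤ ∑ i : Fin Dn, ((if (i:ℕ) < j then (1:ℝ) else 0) + (if (i:ℕ) < j then cap i else 0)) := by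
            apply Finset.sum_le_sum
            intro i _
            by_cases h : (i:ℕ) < j
            · simp only [if_pos h]; exact hτcap i
            · simp only [if_neg h]; norm_num
        _ = (∑ i : Fin Dn, if (i:ℕ) < j then (1:ℝ) else 0)
            + (∑ i : Fin Dn, if (i:ℕ) < j then cap i else 0) := Finset.sum_add_distrib
        _ ≤ j + ∑ i, cap i := by
            apply add_le_add (count_lt_le Dn j)
            apply Finset.sum_le_sum
            intro i _
            by_cases h : (i:ℕ) < j
            · rw [if_pos h]
            · rw [if_neg h]; exact hcap0 i
    have := htot
    linarith
  calc (∑ k : Fin Kn, μ (Fin.castLE hK k))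
      = ∑ k : Fin Kn, ∑ j ∈ Finset.range ((k:ℕ)+1), d j := by
        apply Finset.sum_congr rfl; intro k _
        rw [htel]
        simp only [hf, dif_pos (lt_of_lt_of_le k.isLt hK)]
        exact congrArg μ (Fin.ext rfl)
    _ = ∑ k : Fin Kn, ∑ j ∈ Finset.range Dn, (if j ≤ (k:ℕ) then d j else 0) := by
        apply Finset.sum_congr rfl; intro k _
        rw [show (∑ j ∈ Finset.range ((k:ℕ)+1), d j)
            = ∑ j ∈ Finset.range ((k:ℕ)+1), (if j ≤ (k:ℕ) then d j else 0) from
          Finset.sum_congr rfl fun j hj => (if_pos (by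
            have := Finset.mem_range.mp hj; omega)).symm]
        apply Finset.sum_subset
        · intro a ha
          have := Finset.mem_range.mp ha
          exact Finset.mem_range.mpr (by have := k.isLt; omega)
        · intro a _ ha
          exact if_neg (fun hc => ha (Finset.mem_range.mpr (Nat.lt_succ_of_le hc)))
    _ = ∑ j ∈ Finset.range Dn, ∑ k : Fin Kn, (if j ≤ (k:ℕ) then d j else 0) := Finset.sum_comm
    _ = ∑ j ∈ Finset.range Dn, d j * (∑ k : Fin Kn, (if j ≤ (k:ℕ) then (1:ℝ) else 0)) := by
        apply Finset.sum_congr rfl; intro j _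
        rw [Finset.mul_sum]
        apply Finset.sum_congr rfl; intro k _
        by_cases h : j ≤ (k:ℕ)
        · rw [if_pos h, if_pos h, mul_one]
        · rw [if_neg h, if_neg h, mul_zero]
    _ ≤ ∑ j ∈ Finset.range Dn, d j * T j := by
        apply Finset.sum_le_sum
        intro j _
        apply mul_le_mul_of_nonneg_left _ (hd0 j)
        by_cases hj : j < Kn
        · calc (∑ k : Fin Kn, (if j ≤ (k:ℕ) then (1:ℝ) else 0))
              = Kn - (∑ k : Fin Kn, (if (k:ℕ) < j then (1:ℝ) else 0)) := by
                have : (∑ k : Fin Kn, (if j ≤ (k:ℕ) then (1:ℝ) else 0))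
                    + (∑ k : Fin Kn, (if (k:ℕ) < j then (1:ℝ) else 0)) = Kn := by
                  rw [← Finset.sum_add_distrib]
                  rw [show (∑ k : Fin Kn, ((if j ≤ (k:ℕ) then (1:ℝ) else 0)
                      + (if (k:ℕ) < j then (1:ℝ) else 0))) = ∑ k : Fin Kn, (1:ℝ) from
                    Finset.sum_congr rfl fun k _ => by
                      by_cases h : j ≤ (k:ℕ)
                      · rw [if_pos h, if_neg (by omega), add_zero]
                      · rw [if_neg h, if_pos (by omega), zero_add]]
                  simp
                linarith
            _ ≤ (Kn:ℝ) - j := by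
                have := count_ge Kn j (by omega)
                linarith
            _ ≤ T j := hTlow j hj
        · have : (∑ k : Fin Kn, (if j ≤ (k:ℕ) then (1:ℝ) else 0)) = 0 := by
            apply Finset.sum_eq_zero
            intro k _
            rw [if_neg (by have := k.isLt; omega)]
          rw [this]
          exact hT0 j
    _ = ∑ j ∈ Finset.range Dn, ∑ i : Fin Dn, (if j ≤ (i:ℕ) then d j * τ i else 0) := by
        apply Finset.sum_congr rfl; intro j _
        rw [hT, Finset.mul_sum]
        apply Finset.sum_congr rfl; intro i _
        by_cases h : j ≤ (i:ℕ)
        · rw [if_pos h, if_pos h]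
        · rw [if_neg h, if_neg h, mul_zero]
    _ = ∑ i : Fin Dn, ∑ j ∈ Finset.range Dn, (if j ≤ (i:ℕ) then d j else 0) * τ i := by
        rw [Finset.sum_comm]
        apply Finset.sum_congr rfl; intro i _
        apply Finset.sum_congr rfl; intro j _
        by_cases h : j ≤ (i:ℕ)
        · rw [if_pos h, if_pos h]
        · rw [if_neg h, if_neg h, zero_mul]
    _ = ∑ i : Fin Dn, μ i * τ i := by
        apply Finset.sum_congr rfl; intro i _
        rw [← Finset.sum_mul]
        congr 1
        rw [show (∑ j ∈ Finset.range Dn, (if j ≤ (i:ℕ) then d j else 0))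
            = ∑ j ∈ Finset.range ((i:ℕ)+1), (if j ≤ (i:ℕ) then d j else 0) from
          (Finset.sum_subset (fun a ha => Finset.mem_range.mpr
              (by have := Finset.mem_range.mp ha; have := i.isLt; omega))
            (fun a _ ha => if_neg (fun hc => ha (Finset.mem_range.mpr (by omega))))).symm]
        rw [show (∑ j ∈ Finset.range ((i:ℕ)+1), (if j ≤ (i:ℕ) then d j else 0))
            = ∑ j ∈ Finset.range ((i:ℕ)+1), d j from
          Finset.sum_congr rfl fun j hj => if_pos (by have := Finset.mem_range.mp hj; omega)]
        rw [htel]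
        simp only [hf, dif_pos i.isLt]

end HypPCAaux

namespace HypPCAaux

lemma gram_bounds {Dn Kn : ℕ} (b : Fin Kn → Fin Dn → ℝ) (c : Fin Kn → ℝ)
    (hg : ∀ k l, (∑ i, b k i * b l i) = (if k = l then (1:ℝ) else 0) + c k * c l) :
    (∀ i, (∑ k, b k i * b k i) ≤ 1 + (∑ k, b k i * c k)^2 / (1 + ∑ k, c k * c k))
    ∧ (∑ i, (∑ k, b k i * c k)^2) ≤ (1 + ∑ k, c k * c k) * (∑ k, c k * c k)
    ∧ (∑ i : Fin Dn, ∑ k, b k i * b k i) = Kn + ∑ k, c k * c k := by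
  classical
  set t0 : ℝ := ∑ k, c k * c k with ht0
  have ht0nn : 0 ≤ t0 := Finset.sum_nonneg fun k _ => mul_self_nonneg _
  have hs : (0:ℝ) < 1 + t0 := by linarith
  have hsne : (1 + t0) ≠ 0 := ne_of_gt hs
  have master : ∀ (F G : Fin Kn → ℝ),
      (∑ j, (∑ k, F k * b k j) * (∑ m, G m * b m j))
        = (∑ k, F k * G k) + (∑ k, F k * c k) * (∑ m, G m * c m) := by
    intro F G
    calc (∑ j, (∑ k, F k * b k j) * (∑ m, G m * b m j))
        = ∑ j, ∑ k, ∑ m, (F k * G m) * (b k j * b m j) := by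
          apply Finset.sum_congr rfl; intro j _
          rw [Finset.sum_mul_sum]
          apply Finset.sum_congr rfl; intro k _
          apply Finset.sum_congr rfl; intro m _
          ring
      _ = ∑ k, ∑ j, ∑ m, (F k * G m) * (b k j * b m j) := Finset.sum_comm
      _ = ∑ k, ∑ m, (F k * G m) * (∑ j, b k j * b m j) := by
          apply Finset.sum_congr rfl; intro k _
          rw [Finset.sum_comm]
          apply Finset.sum_congr rfl; intro m _
          rw [← Finset.mul_sum]
      _ = ∑ k, ∑ m, (F k * G m) * ((if k = m then (1:ℝ) else 0) + c k * c m) := by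
          apply Finset.sum_congr rfl; intro k _
          apply Finset.sum_congr rfl; intro m _
          rw [hg k m]
      _ = (∑ k, F k * G k) + (∑ k, F k * c k) * (∑ m, G m * c m) := by
          rw [show (∑ k, ∑ m, (F k * G m) * ((if k = m then (1:ℝ) else 0) + c k * c m))
              = ∑ k, ((F k * G k) + (F k * c k) * (∑ m, G m * c m)) from
            Finset.sum_congr rfl fun k _ => by
              simp only [mul_add]
              rw [Finset.sum_add_distrib]
              congr 1
              · simp only [mul_ite, mul_one, mul_zero]
                rw [Finset.sum_ite_eq]
                simp
              · rw [Finset.mul_sum]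
                apply Finset.sum_congr rfl; intro m _
                ring]
          rw [Finset.sum_add_distrib, ← Finset.sum_mul]
  set q : Fin Dn → ℝ := fun i => ∑ k, b k i * c k with hqdef
  set A : Fin Dn → Fin Dn → ℝ := fun i j => ∑ k, b k i * b k j with hAdef
  have hbq : ∀ i, (∑ k, b k i * c k) = q i := fun i => rfl
  have hqc : ∀ j, q j = ∑ m, c m * b m j :=
    fun j => Finset.sum_congr rfl fun m _ => mul_comm _ _
  have hA2 : ∀ i l : Fin Dn, (∑ j, A i j * A l j) = A i l + q i * q l := by
    intro i l
    exact master (fun k => b k i) (fun k => b k l)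
  have hAq : ∀ i : Fin Dn, (∑ j, A i j * q j) = (1 + t0) * q i := by
    intro i
    calc (∑ j, A i j * q j)
        = ∑ j, (∑ k, b k i * b k j) * (∑ m, c m * b m j) := by
          apply Finset.sum_congr rfl; intro j _
          rw [hqc j]
      _ = (∑ k, b k i * c k) + (∑ k, b k i * c k) * (∑ m, c m * c m) :=
          master (fun k => b k i) c
      _ = (1 + t0) * q i := by rw [← ht0, hbq]; ring
  have hqq : (∑ j, q j * q j) = (1 + t0) * t0 := by
    calc (∑ j, q j * q j)
        = ∑ j, (∑ k, c k * b k j) * (∑ m, c m * b m j) := by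
          apply Finset.sum_congr rfl; intro j _
          rw [hqc j]
      _ = (∑ k, c k * c k) + (∑ k, c k * c k) * (∑ m, c m * c m) := master c c
      _ = (1 + t0) * t0 := by rw [← ht0]; ring
  have hqq' : (∑ i, (q i)^2) = (1 + t0) * t0 := by
    rw [← hqq]
    apply Finset.sum_congr rfl; intro j _; ring
  refine ⟨?_, le_of_eq hqq', ?_⟩
  · intro i
    set β : ℝ := A i i - (q i)^2 / (1 + t0) with hβ
    have hsq : β = ∑ j, (A i j - q i * q j / (1 + t0))^2 := by
      have expand : ∀ j, (A i j - q i * q j / (1 + t0))^2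
          = A i j * A i j - (2 * q i / (1 + t0)) * (A i j * q j)
            + ((q i)^2 / (1 + t0)^2) * (q j * q j) := by
        intro j; field_simp; ring
      calc β = (A i i + q i * q i) - (2 * q i / (1 + t0)) * ((1 + t0) * q i)
          + ((q i)^2 / (1 + t0)^2) * ((1 + t0) * t0) := by
            rw [hβ]; field_simp; ring
        _ = (∑ j, A i j * A i j) - (2 * q i / (1 + t0)) * (∑ j, A i j * q j)
            + ((q i)^2 / (1 + t0)^2) * (∑ j, q j * q j) := by
            rw [hA2 i i, hAq i, hqq]
        _ = ∑ j, (A i j - q i * q j / (1 + t0))^2 := by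
            rw [Finset.sum_congr rfl fun j _ => expand j, Finset.sum_add_distrib,
              Finset.sum_sub_distrib, ← Finset.mul_sum, ← Finset.mul_sum]
    have hβsq : β^2 ≤ β := by
      calc β^2 = (A i i - q i * q i / (1 + t0))^2 := by rw [hβ]; ring
        _ ≤ ∑ j, (A i j - q i * q j / (1 + t0))^2 :=
            Finset.single_le_sum (f := fun j => (A i j - q i * q j / (1 + t0))^2)
              (fun j _ => sq_nonneg _) (Finset.mem_univ i)
        _ = β := hsq.symm
    have hβ1 : β ≤ 1 := by nlinarith [hβsq, sq_nonneg (β - 1)]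
    calc (∑ k, b k i * b k i) = A i i := rfl
      _ = β + (q i)^2 / (1 + t0) := by rw [hβ]; ring
      _ ≤ 1 + (q i)^2 / (1 + t0) := add_le_add_left hβ1 _
  · calc (∑ i : Fin Dn, ∑ k, b k i * b k i)
        = ∑ k, ∑ i : Fin Dn, b k i * b k i := Finset.sum_comm
      _ = ∑ k : Fin Kn, (1 + c k * c k) := by
          apply Finset.sum_congr rfl; intro k _
          rw [hg k k, if_pos rfl]
      _ = Kn + t0 := by
          rw [Finset.sum_add_distrib, ht0]
          simp [Finset.card_univ]

end HypPCAaux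


open HypPCAaux

/-- For x_1,…,x_N ∈ H^D with J_D-diagonalizable second-moment matrix
C_x = (1/N) Σ_n x_n x_nᵀ having a J_D-unitary eigenbasis v (index 0 the negative
J_D-eigenvector) and distinct absolute J_D-eigenvalues λ, the positive eigenvalues
listed increasingly, the minimum over p ∈ H^D and Lorentz-orthonormal
h'_1,…,h'_{K'} ∈ p^⊥ of Σ_k h'_kᵀ J_D C_x J_D h'_k is attained with
h'_k the positive J_D-eigenvectors of the K' smallest positive J_D-eigenvalues and
p the (sign-)scaled negative J_D-eigenvector, and equals the sum of those K' smallest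
positive J_D-eigenvalues. -/
theorem hyperbolic_pca_minimum
    (D K' N : ℕ) (hK : K' ≤ D)
    (x : Fin N → (Fin (D + 1) → ℝ))
    (hx : ∀ n, x n ⬝ᵥ (JmatR D *ᵥ x n) = -1 ∧ 0 < x n 0)
    (Cx : Matrix (Fin (D + 1)) (Fin (D + 1)) ℝ)
    (hCx : Cx = (N : ℝ)⁻¹ • ∑ n, Matrix.vecMulVec (x n) (x n))
    (v : Fin (D + 1) → (Fin (D + 1) → ℝ)) (lam : Fin (D + 1) → ℝ)
    (hJunit : ∀ i j, v i ⬝ᵥ (JmatR D *ᵥ v j) =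
      if i = j then (if i = 0 then (-1 : ℝ) else 1) else 0)
    (heig : ∀ i, (Cx * JmatR D) *ᵥ v i =
      (Real.sign (v i ⬝ᵥ (JmatR D *ᵥ v i)) * lam i) • v i)
    (hdist : ∀ i j, i ≠ j → |lam i| ≠ |lam j|)
    (hsort : ∀ i j : Fin (D + 1), i ≠ 0 → j ≠ 0 → i ≤ j → lam i ≤ lam j) :
    (∃ c : ℝ, (c = 1 ∨ c = -1) ∧
      ((c • v 0) ⬝ᵥ (JmatR D *ᵥ (c • v 0)) = -1 ∧ 0 < (c • v 0) 0) ∧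
      (∀ k : Fin K',
        v (Fin.castLE hK k).succ ⬝ᵥ (JmatR D *ᵥ (c • v 0)) = 0) ∧
      (∑ k : Fin K',
          v (Fin.castLE hK k).succ ⬝ᵥ
            (JmatR D *ᵥ (Cx *ᵥ (JmatR D *ᵥ v (Fin.castLE hK k).succ)))) =
        ∑ k : Fin K', lam (Fin.castLE hK k).succ) ∧
    IsLeast {s : ℝ | ∃ (p : Fin (D + 1) → ℝ)
        (h' : Fin K' → (Fin (D + 1) → ℝ)),
        (p ⬝ᵥ (JmatR D *ᵥ p) = -1 ∧ 0 < p 0) ∧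
        (∀ k, h' k ⬝ᵥ (JmatR D *ᵥ p) = 0) ∧
        (∀ i j, h' i ⬝ᵥ (JmatR D *ᵥ h' j) = if i = j then 1 else 0) ∧
        s = ∑ k, h' k ⬝ᵥ (JmatR D *ᵥ (Cx *ᵥ (JmatR D *ᵥ h' k)))}
      (∑ k : Fin K', lam (Fin.castLE hK k).succ) := by
  classical
  have hvv : ∀ i j, innerJ D (v i) (v j) = if i = j then eps D i else 0 := by
    intro i j
    rw [← dotJ, hJunit i j]
    unfold eps
    by_cases h : i = j <;> simp [h]
  have hAv : ∀ i, (Cx * JmatR D) *ᵥ v i = (eps D i * lam i) • v i := by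
    intro i
    rw [heig i]
    congr 2
    rw [dotJ, hvv i i, if_pos rfl]
    unfold eps
    split
    · rw [Real.sign_of_neg (by norm_num)]
    · exact Real.sign_one
  have hval : ∀ w, w ⬝ᵥ (JmatR D *ᵥ (Cx *ᵥ (JmatR D *ᵥ w)))
      = ∑ i, lam i * (innerJ D w (v i))^2 := value_eq Cx v lam hvv hAv
  have hlamval : ∀ i, v i ⬝ᵥ (JmatR D *ᵥ (Cx *ᵥ (JmatR D *ᵥ v i))) = lam i := by
    intro i
    rw [hval (v i)]
    rw [Finset.sum_eq_single i]
    · rw [hvv i i, if_pos rfl]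
      linear_combination (lam i) * eps_sq (D := D) i
    · intro j _ hj
      rw [hvv i j, if_neg (Ne.symm hj)]
      ring
    · intro h; exact absurd (Finset.mem_univ i) h
  have hlam0 : ∀ i, 0 ≤ lam i := by
    intro i
    rw [← hlamval i]
    exact value_nonneg x Cx hCx (v i)
  -- choice of sign c
  have hv00 : 1 ≤ v 0 0 * v 0 0 := by
    have h := hvv 0 0
    rw [if_pos rfl, eps_zero] at h
    unfold innerJ at h
    rw [Fin.sum_univ_succ, eps_zero] at h
    have hS : 0 ≤ ∑ i : Fin D, eps D i.succ * v 0 i.succ * v 0 i.succ := by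
      apply Finset.sum_nonneg
      intro i _
      rw [eps_succ]
      nlinarith [mul_self_nonneg (v 0 i.succ)]
    nlinarith
  have hv00ne : v 0 0 ≠ 0 := by
    intro h0; rw [h0] at hv00; norm_num at hv00
  set c : ℝ := if 0 < v 0 0 then 1 else -1 with hc
  have hcor : c = 1 ∨ c = -1 := by
    rw [hc]; split
    · exact Or.inl rfl
    · exact Or.inr rfl
  have hcc : c * c = 1 := by rw [hc]; split <;> norm_num
  have hc0 : 0 < c * v 0 0 := by
    rw [hc]; split
    · rename_i h; simpa using h
    · rename_i h
      have : v 0 0 < 0 := lt_of_le_of_ne (not_lt.mp h) hv00ne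
      nlinarith
  have hsm1 : ∀ u w : Fin (D+1) → ℝ, innerJ D u (c • w) = c * innerJ D u w := by
    intro u w
    unfold innerJ
    rw [Finset.mul_sum]
    apply Finset.sum_congr rfl; intro a _
    simp only [Pi.smul_apply, smul_eq_mul]
    ring
  have hsm2 : ∀ u w : Fin (D+1) → ℝ, innerJ D (c • u) w = c * innerJ D u w := by
    intro u w
    rw [innerJ_comm, hsm1, innerJ_comm]
  have hp1 : (c • v 0) ⬝ᵥ (JmatR D *ᵥ (c • v 0)) = -1 := by
    rw [dotJ, hsm2, hsm1, hvv 0 0, if_pos rfl, eps_zero]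
    nlinarith [hcc]
  have hp2 : 0 < (c • v 0) 0 := by
    simpa using hc0
  have horthp : ∀ k : Fin K',
      v (Fin.castLE hK k).succ ⬝ᵥ (JmatR D *ᵥ (c • v 0)) = 0 := by
    intro k
    rw [dotJ, hsm1, hvv, if_neg (Fin.succ_ne_zero _)]
    ring
  have hsumeq : (∑ k : Fin K',
      v (Fin.castLE hK k).succ ⬝ᵥ
        (JmatR D *ᵥ (Cx *ᵥ (JmatR D *ᵥ v (Fin.castLE hK k).succ))))
      = ∑ k : Fin K', lam (Fin.castLE hK k).succ :=
    Finset.sum_congr rfl fun k _ => hlamval _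
  refine ⟨⟨c, hcor, ⟨hp1, hp2⟩, horthp, hsumeq⟩, ?_, ?_⟩
  · -- membership
    refine ⟨c • v 0, fun k => v (Fin.castLE hK k).succ, ⟨hp1, hp2⟩, horthp, ?_, hsumeq.symm⟩
    intro i j
    have hiff : (Fin.castLE hK i).succ = (Fin.castLE hK j).succ ↔ i = j := by
      constructor
      · intro he
        have h2 := Fin.succ_inj.mp he
        exact Fin.castLE_injective hK h2
      · rintro rfl; rfl
    rw [hJunit]
    by_cases h : i = j
    · subst h
      rw [if_pos rfl, if_pos rfl, if_neg (Fin.succ_ne_zero _)]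
    · rw [if_neg (fun he => h (hiff.mp he)), if_neg h]
  · -- lower bound
    rintro s ⟨p, h', ⟨hp'1, hp'2⟩, hor, hnorm, rfl⟩
    set α : Fin K' → Fin (D+1) → ℝ := fun k i => innerJ D (h' k) (v i) with hα
    have hgram : ∀ k l, (∑ i, eps D i * α k i * α l i) = if k = l then 1 else 0 := by
      intro k l
      rw [hα]
      calc (∑ i, eps D i * innerJ D (h' k) (v i) * innerJ D (h' l) (v i))
          = innerJ D (h' k) (h' l) := parseval v hvv (h' k) (h' l)
        _ = if k = l then 1 else 0 := by rw [← dotJ]; exact hnorm k l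
    set b : Fin K' → Fin D → ℝ := fun k i => α k i.succ with hb
    set cc : Fin K' → ℝ := fun k => α k 0 with hcc'
    have hgram' : ∀ k l, (∑ i : Fin D, b k i * b l i)
        = (if k = l then (1:ℝ) else 0) + cc k * cc l := by
      intro k l
      have h := hgram k l
      rw [Fin.sum_univ_succ, eps_zero] at h
      have h2 : (∑ i : Fin D, eps D i.succ * α k i.succ * α l i.succ)
          = ∑ i : Fin D, b k i * b l i := by
        apply Finset.sum_congr rfl; intro i _
        rw [eps_succ, hb]
        ring
      rw [h2] at h
      rw [hcc']
      simp only
      linarith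
    obtain ⟨hcap, hqbound, htot⟩ := gram_bounds b cc hgram'
    set t0 : ℝ := ∑ k, cc k * cc k with ht0
    have ht0nn : 0 ≤ t0 := Finset.sum_nonneg fun k _ => mul_self_nonneg _
    have hspos : (0:ℝ) < 1 + t0 := by linarith
    -- rewrite target sum
    have hsum2 : (∑ k, h' k ⬝ᵥ (JmatR D *ᵥ (Cx *ᵥ (JmatR D *ᵥ h' k))))
        = ∑ i : Fin (D+1), lam i * (∑ k, (α k i)^2) := by
      calc (∑ k, h' k ⬝ᵥ (JmatR D *ᵥ (Cx *ᵥ (JmatR D *ᵥ h' k))))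
          = ∑ k, ∑ i, lam i * (α k i)^2 := Finset.sum_congr rfl fun k _ => hval (h' k)
        _ = ∑ i, ∑ k, lam i * (α k i)^2 := Finset.sum_comm
        _ = ∑ i : Fin (D+1), lam i * (∑ k, (α k i)^2) := by
            apply Finset.sum_congr rfl; intro i _
            rw [Finset.mul_sum]
    rw [hsum2, Fin.sum_univ_succ]
    have hlp := lp hK (fun i => lam i.succ) (fun i => ∑ k, b k i * b k i)
      (fun i => (∑ k, b k i * cc k)^2 / (1 + t0))
      (fun i => hlam0 _)
      (fun i j hij => hsort i.succ j.succ (Fin.succ_ne_zero _) (Fin.succ_ne_zero _)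
        (by rwa [Fin.succ_le_succ_iff]))
      (fun i => Finset.sum_nonneg fun k _ => mul_self_nonneg _)
      (fun i => div_nonneg (sq_nonneg _) (le_of_lt hspos))
      (fun i => hcap i)
      (by
        have hcapsum : (∑ i : Fin D, (∑ k, b k i * cc k)^2 / (1 + t0)) ≤ t0 := by
          rw [← Finset.sum_div]
          rw [div_le_iff₀ hspos]
          calc (∑ i : Fin D, (∑ k, b k i * cc k)^2) ≤ (1 + t0) * t0 := hqbound
            _ = t0 * (1 + t0) := by ring
        rw [htot]
        linarith)
    calc (∑ k : Fin K', lam (Fin.castLE hK k).succ)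
        ≤ ∑ i : Fin D, lam i.succ * (∑ k, b k i * b k i) := hlp
      _ = ∑ i : Fin D, lam i.succ * (∑ k, (α k i.succ)^2) := by
          apply Finset.sum_congr rfl; intro i _
          congr 1
          apply Finset.sum_congr rfl; intro k _
          rw [hb]; ring
      _ ≤ lam 0 * (∑ k, (α k 0)^2) + ∑ i : Fin D, lam i.succ * (∑ k, (α k i.succ)^2) := by
          have : 0 ≤ lam 0 * (∑ k, (α k 0)^2) :=
            mul_nonneg (hlam0 0) (Finset.sum_nonneg fun k _ => sq_nonneg _)
          linarith
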